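/- Let μ be a permutation-invariant probability measure on ℝⁿ with respect to which all polynomials are integrable, let f be a multilinear polynomial in x₁,…,xₙ, and let i, j, k be three distinct elements of [n]. Then Inf_{ij}[f] ≤ (9/2)·(Inf_{ik}[f] + Inf_{jk}[f]). -/

import Mathlib

open MvPolynomial MeasureTheory

/-- A multilinear polynomial: every monomial is squarefree. -/
def IsMultilinear {n : ℕ} (P : MvPolynomial (Fin n) ℝ) : Prop :=
  ∀ m ∈ P.support, ∀ i, m i ≤ 1

/-- A permutation-invariant probability measure on `ℝⁿ`. -/
def PermInvariant {n : ℕ} (μ : Measure (Fin n → ℝ)) : Prop :=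
  ∀ π : Equiv.Perm (Fin n), Measure.map (fun x => x ∘ π) μ = μ

/-- The influence of the pair `(i,j)`: `Inf_{ij}[f] = ½ E_μ[(f^{(i j)} - f)²]`,
where `f^{(i j)}` is `f` with the variables `x_i` and `x_j` swapped. -/
noncomputable def pairInf {n : ℕ} (μ : Measure (Fin n → ℝ))
    (f : MvPolynomial (Fin n) ℝ) (i j : Fin n) : ℝ :=
  (1 / 2) * ∫ x, (eval x (MvPolynomial.rename (⇑(Equiv.swap i j)) f) - eval x f) ^ 2 ∂μ

/-! The transposition `(i j)` is the conjugate `(i k)(j k)(i k)`, so with `σ = (i k)`, `τ = (j k)`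
we can telescope `f^{(i j)} - f = σ τ (σ f - f) + σ (τ f - f) + (σ f - f)`. Permutation invariance
of `μ` makes renaming variables an isometry for the `L²(μ)` norm, hence, with `a`, `b`, `c` the
norms of `f^{(i k)} - f`, `f^{(j k)} - f`, `f^{(i j)} - f`, we get `c ≤ 2a + b` and symmetrically
`c ≤ a + 2b`. Averaging, `c ≤ 3/2 (a + b)`, and squaring gives `c² ≤ 9/2 (a² + b²)`. -/

theorem conj_sub_le_two_mul_add {A : Type*} [AddCommGroup A] {N : A → ℝ}
    (hN : ∀ a b, N (a + b) ≤ N a + N b) {σ τ : A →+ A}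
    (hσ : ∀ a, N (σ a) = N a) (hτ : ∀ a, N (τ a) = N a) (f : A) :
    N (σ (τ (σ f)) - f) ≤ 2 * N (σ f - f) + N (τ f - f) := by
  have hsplit : σ (τ (σ f)) - f = σ (τ (σ f - f)) + σ (τ f - f) + (σ f - f) := by
    simp only [map_sub]
    abel
  calc N (σ (τ (σ f)) - f)
      ≤ N (σ (τ (σ f - f))) + N (σ (τ f - f)) + N (σ f - f) := by
        rw [hsplit]
        exact (hN _ _).trans (add_le_add_left (hN _ _) _)
    _ = 2 * N (σ f - f) + N (τ f - f) := by
        rw [hσ, hτ, hσ]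
        ring

theorem sq_le_of_le_two_mul_add {a b c : ℝ} (h₁ : c ≤ 2 * a + b) (h₂ : c ≤ 2 * b + a)
    (hc : 0 ≤ c) : c ^ 2 ≤ 9 / 2 * (a ^ 2 + b ^ 2) := by
  nlinarith [sq_nonneg (a - b)]

theorem MeasureTheory.lpNorm_two_sq {α : Type*} [MeasurableSpace α] {μ : Measure α} {f : α → ℝ}
    (hf : AEStronglyMeasurable f μ) : lpNorm f 2 μ ^ 2 = ∫ x, f x ^ 2 ∂μ := by
  have h := lpNorm_nnreal_eq_integral_norm_rpow (p := 2) two_ne_zero hf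
  simp only [ENNReal.coe_ofNat, NNReal.coe_ofNat, Real.rpow_two, Real.norm_eq_abs, sq_abs] at h
  rw [h, ← one_div, ← Real.sqrt_eq_rpow, Real.sq_sqrt (integral_nonneg fun x => sq_nonneg _)]

variable {n : ℕ}

noncomputable def polyL2Norm (μ : Measure (Fin n → ℝ)) (g : MvPolynomial (Fin n) ℝ) : ℝ :=
  lpNorm (fun x => eval x g) 2 μ

theorem pairInf_eq_half_polyL2Norm_sq (μ : Measure (Fin n → ℝ)) (f : MvPolynomial (Fin n) ℝ)
    (i j : Fin n) :
    pairInf μ f i j = 1 / 2 * polyL2Norm μ (rename (Equiv.swap i j) f - f) ^ 2 := by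
  rw [polyL2Norm, lpNorm_two_sq (continuous_eval _).aestronglyMeasurable, pairInf]
  simp only [map_sub]

theorem polyL2Norm_add_le {μ : Measure (Fin n → ℝ)}
    (hint : ∀ P : MvPolynomial (Fin n) ℝ, Integrable (fun x => eval x P) μ)
    (g h : MvPolynomial (Fin n) ℝ) :
    polyL2Norm μ (g + h) ≤ polyL2Norm μ g + polyL2Norm μ h := by
  have hg : MemLp (fun x => eval x g) 2 μ := by
    refine (memLp_two_iff_integrable_sq (continuous_eval g).aestronglyMeasurable).2 ?_
    exact (hint (g ^ 2)).congr (.of_forall fun x => map_pow (eval x) g 2)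
  simpa only [polyL2Norm, map_add, Pi.add_def] using lpNorm_add_le hg one_le_two

theorem polyL2Norm_rename {μ : Measure (Fin n → ℝ)} (hinv : PermInvariant μ)
    (π : Equiv.Perm (Fin n)) (g : MvPolynomial (Fin n) ℝ) :
    polyL2Norm μ (rename π g) = polyL2Norm μ g := by
  have hπ : MeasurePreserving (fun x : Fin n → ℝ => x ∘ π) μ μ :=
    ⟨measurable_pi_lambda _ fun a => measurable_pi_apply _, hinv π⟩
  have hg := (continuous_eval g).aestronglyMeasurable (μ := μ)
  simp only [polyL2Norm, eval_rename]
  change lpNorm ((fun x => eval x g) ∘ fun x => x ∘ π) 2 μ = lpNorm (fun x => eval x g) 2 μ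
  rw [← toReal_eLpNorm hg, ← toReal_eLpNorm (hg.comp_measurePreserving hπ)]
  exact congrArg ENNReal.toReal (eLpNorm_comp_measurePreserving hg hπ)

theorem rename_swap_eq_conj {i j k : Fin n} (hij : i ≠ j) (hjk : j ≠ k)
    (f : MvPolynomial (Fin n) ℝ) :
    rename (Equiv.swap i j) f =
      rename (Equiv.swap i k) (rename (Equiv.swap j k) (rename (Equiv.swap i k) f)) := by
  rw [rename_rename, rename_rename, ← Equiv.Perm.coe_mul, ← Equiv.Perm.coe_mul,
    Equiv.swap_comm i k, Equiv.swap_mul_swap_mul_swap hjk hij.symm]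

theorem polyL2Norm_rename_swap_sub_le {μ : Measure (Fin n → ℝ)} (hinv : PermInvariant μ)
    (hint : ∀ P : MvPolynomial (Fin n) ℝ, Integrable (fun x => eval x P) μ)
    (f : MvPolynomial (Fin n) ℝ) {i j k : Fin n} (hij : i ≠ j) (hjk : j ≠ k) :
    polyL2Norm μ (rename (Equiv.swap i j) f - f) ≤
      2 * polyL2Norm μ (rename (Equiv.swap i k) f - f) +
        polyL2Norm μ (rename (Equiv.swap j k) f - f) := by
  rw [rename_swap_eq_conj hij hjk]
  exact conj_sub_le_two_mul_add (polyL2Norm_add_le hint) (σ := (rename _).toAddMonoidHom)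
    (τ := (rename _).toAddMonoidHom) (polyL2Norm_rename hinv _) (polyL2Norm_rename hinv _) f

theorem influence_triangle {n : ℕ} (μ : Measure (Fin n → ℝ))
    (hinv : PermInvariant μ)
    (hint : ∀ P : MvPolynomial (Fin n) ℝ, Integrable (fun x => eval x P) μ)
    (f : MvPolynomial (Fin n) ℝ)
    (i j k : Fin n) (hij : i ≠ j) (hik : i ≠ k) (hjk : j ≠ k) :
    pairInf μ f i j ≤ (9 / 2) * (pairInf μ f i k + pairInf μ f j k) := by
  have h₁ := polyL2Norm_rename_swap_sub_le hinv hint f hij hjk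
  have h₂ := polyL2Norm_rename_swap_sub_le hinv hint f hij.symm hik
  rw [Equiv.swap_comm] at h₂
  simp only [pairInf_eq_half_polyL2Norm_sq]
  nlinarith [sq_le_of_le_two_mul_add h₁ h₂ lpNorm_nonneg]
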